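/- For a field F of characteristic zero and each m ≥ 0, the representation Sym^m(F²) of SL₂(F) is irreducible, and two such representations Sym^m(F²) and Sym^{m'}(F²) are isomorphic as SL₂(F)-representations if and only if m = m'. -/

import Mathlib

open Polynomial

/-- The `m`-th symmetric power of the standard 2-dimensional representation of
`SL₂(F)`, modelled on coefficient vectors `Fin (m+1) → F` of homogeneous
polynomials of degree `m` in two variables. -/
noncomputable def symAct (F : Type*) [Field F] (m : ℕ)
    (g : Matrix (Fin 2) (Fin 2) F) : (Fin (m + 1) → F) →ₗ[F] (Fin (m + 1) → F) :=
  LinearMap.pi fun i : Fin (m + 1) =>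
    (Polynomial.lcoeff F (i : ℕ)).comp
      (Fintype.bilinearCombination F F fun j : Fin (m + 1) =>
        (C (g 0 0) * X + C (g 1 0)) ^ (j : ℕ) *
          (C (g 0 1) * X + C (g 1 1)) ^ (m - (j : ℕ)))

section Aux

variable {F : Type*} [Field F]

lemma symAct_apply' (m : ℕ) (g : Matrix (Fin 2) (Fin 2) F) (x : Fin (m+1) → F) (i : Fin (m+1)) :
    symAct F m g x i = ∑ j : Fin (m+1), x j *
      ((C (g 0 0) * X + C (g 1 0)) ^ (j:ℕ) * (C (g 0 1) * X + C (g 1 1)) ^ (m - (j:ℕ))).coeff i := by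
  simp [symAct, Fintype.bilinearCombination_apply, Fintype.linearCombination_apply, finset_sum_coeff, coeff_smul, smul_eq_mul]

lemma symAct_single' (m : ℕ) (g : Matrix (Fin 2) (Fin 2) F) (j : Fin (m+1)) (i : Fin (m+1)) :
    symAct F m g (Pi.single j 1) i =
      ((C (g 0 0) * X + C (g 1 0)) ^ (j:ℕ) * (C (g 0 1) * X + C (g 1 1)) ^ (m - (j:ℕ))).coeff i := by
  simp [symAct]

lemma symAct_diag' (m : ℕ) (a b : F) (x : Fin (m+1) → F) (i : Fin (m+1)) :
    symAct F m !![a,0;0,b] x i = a^(i:ℕ) * b^(m-(i:ℕ)) * x i := by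
  rw [symAct_apply']
  have hpoly : ∀ j : Fin (m+1),
      ((C (!![a,0;0,b] 0 0) * X + C (!![a,0;0,b] 1 0)) ^ (j:ℕ) *
        (C (!![a,0;0,b] 0 1) * X + C (!![a,0;0,b] 1 1)) ^ (m - (j:ℕ)))
      = C (a^(j:ℕ) * b^(m-(j:ℕ))) * X^(j:ℕ) := by
    intro j
    have e00 : !![a,0;0,b] 0 0 = a := rfl
    have e10 : !![a,0;0,b] 1 0 = 0 := rfl
    have e01 : !![a,0;0,b] 0 1 = 0 := rfl
    have e11 : !![a,0;0,b] 1 1 = b := rfl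
    rw [e00, e10, e01, e11, map_zero, add_zero, zero_mul, zero_add, mul_pow, C_mul, C_pow, C_pow]
    ring
  simp only [hpoly, coeff_C_mul, coeff_X_pow]
  rw [Finset.sum_eq_single i]
  · simp [mul_comm]
  · intro k _ hne
    rw [if_neg (fun h => hne (Fin.ext h.symm)), mul_zero, mul_zero]
  · simp

lemma symAct_upper' (m : ℕ) (j : Fin (m+1)) :
    symAct F m !![(1:F),1;0,1] (Pi.single j 1) (Fin.last m) = 1 := by
  rw [symAct_single']
  have e00 : !![(1:F),1;0,1] 0 0 = 1 := rfl
  have e10 : !![(1:F),1;0,1] 1 0 = 0 := rfl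
  have e01 : !![(1:F),1;0,1] 0 1 = 1 := rfl
  have e11 : !![(1:F),1;0,1] 1 1 = 1 := rfl
  rw [e00, e10, e01, e11, map_zero, map_one, add_zero, one_mul]
  have hj : (j:ℕ) ≤ m := Nat.lt_succ_iff.mp j.isLt
  have hm : (Fin.last m : ℕ) = (m - (j:ℕ)) + (j:ℕ) := by
    simp [Nat.sub_add_cancel hj]
  rw [hm, coeff_X_pow_mul, coeff_X_add_one_pow, Nat.choose_self, Nat.cast_one]

lemma symAct_lower' (m : ℕ) (i : Fin (m+1)) :
    symAct F m !![(1:F),0;1,1] (Pi.single (Fin.last m) 1) i = (m.choose i : F) := by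
  rw [symAct_single']
  have e00 : !![(1:F),0;1,1] 0 0 = 1 := rfl
  have e10 : !![(1:F),0;1,1] 1 0 = 1 := rfl
  have e01 : !![(1:F),0;1,1] 0 1 = 0 := rfl
  have e11 : !![(1:F),0;1,1] 1 1 = 1 := rfl
  rw [e00, e10, e01, e11, map_one, map_zero, zero_mul, zero_add, one_mul]
  simp [coeff_X_add_one_pow]

lemma single_mem_of_mem {n : ℕ} (p : Submodule F (Fin n → F)) (c : Fin n → F)
    (hc : Function.Injective c)
    (hT : ∀ x ∈ p, (fun k => c k * x k) ∈ p)
    {x : Fin n → F} (hx : x ∈ p) {j : Fin n} (hj : x j ≠ 0) :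
    Pi.single j (1:F) ∈ p := by
  have key : ∀ s : Finset (Fin n), (fun k => (∏ i ∈ s, (c k - c i)) * x k) ∈ p := by
    intro s
    induction s using Finset.induction_on with
    | empty => simpa using hx
    | @insert a s ha ih =>
      have h2 := p.sub_mem (hT _ ih) (p.smul_mem (c a) ih)
      have heq : (fun k => (∏ i ∈ insert a s, (c k - c i)) * x k)
          = (fun k => c k * ((∏ i ∈ s, (c k - c i)) * x k))
            - c a • (fun k => (∏ i ∈ s, (c k - c i)) * x k) := by
        funext k
        simp only [Pi.sub_apply, Pi.smul_apply, smul_eq_mul, Finset.prod_insert ha]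
        ring
      rw [heq]; exact h2
  have hmem := key (Finset.univ.erase j)
  set lam := (∏ i ∈ Finset.univ.erase j, (c j - c i)) * x j with hlam
  have hne : lam ≠ 0 := by
    refine mul_ne_zero (Finset.prod_ne_zero_iff.2 fun i hi => sub_ne_zero.2 ?_) hj
    exact fun h => (Finset.mem_erase.1 hi).1 (hc h).symm
  have heq : (fun k => (∏ i ∈ Finset.univ.erase j, (c k - c i)) * x k)
      = lam • (Pi.single j (1:F) : Fin n → F) := by
    funext k
    by_cases hk : k = j
    · subst hk; simp [hlam]
    · have hk' : k ∈ Finset.univ.erase j := Finset.mem_erase.2 ⟨hk, Finset.mem_univ _⟩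
      rw [Finset.prod_eq_zero hk' (by simp), zero_mul]
      simp [Pi.single_eq_of_ne hk]
  rw [heq] at hmem
  have h3 := p.smul_mem lam⁻¹ hmem
  rwa [smul_smul, inv_mul_cancel₀ hne, one_smul] at h3

lemma symAct_irred [CharZero F] (m : ℕ) (p : Submodule F (Fin (m+1) → F))
    (hp : ∀ g : Matrix.SpecialLinearGroup (Fin 2) F, ∀ x ∈ p,
      symAct F m (g : Matrix (Fin 2) (Fin 2) F) x ∈ p) :
    p = ⊥ ∨ p = ⊤ := by
  by_cases hb : p = ⊥
  · exact Or.inl hb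
  right
  obtain ⟨x, hxp, hx0⟩ := p.ne_bot_iff.1 hb
  obtain ⟨j, hj⟩ : ∃ j, x j ≠ 0 := by
    by_contra h
    push_neg at h
    exact hx0 (funext h)
  -- the diagonal element of SL₂
  have hdet : Matrix.det !![(2:F), 0; 0, (2:F)⁻¹] = 1 := by
    rw [Matrix.det_fin_two_of]
    field_simp
    norm_num
  set d : Matrix.SpecialLinearGroup (Fin 2) F := ⟨!![(2:F), 0; 0, (2:F)⁻¹], hdet⟩ with hd
  -- invariance under the scaled diagonal operator
  set c : Fin (m+1) → F := fun k => (4:F)^(k:ℕ) with hcdef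
  have hT : ∀ y ∈ p, (fun k => c k * y k) ∈ p := by
    intro y hy
    have h1 := p.smul_mem ((2:F)^m) (hp d y hy)
    have heq : ((2:F)^m) • symAct F m (d : Matrix (Fin 2) (Fin 2) F) y
        = fun k => c k * y k := by
      funext k
      have hk : (k:ℕ) ≤ m := Nat.lt_succ_iff.mp k.isLt
      have hdc : (d : Matrix (Fin 2) (Fin 2) F) = !![(2:F), 0; 0, (2:F)⁻¹] := rfl
      rw [Pi.smul_apply, hdc, symAct_diag', smul_eq_mul]
      have h2m : (2:F)^m = 2^(k:ℕ) * 2^(m-(k:ℕ)) := by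
        rw [← pow_add, Nat.add_sub_cancel' hk]
      have hone : (2:F)^(m-(k:ℕ)) * ((2:F)⁻¹)^(m-(k:ℕ)) = 1 := by
        rw [← mul_pow, mul_inv_cancel₀ two_ne_zero, one_pow]
      have h4 : c k = 2^(k:ℕ) * 2^(k:ℕ) := by
        show (4:F)^(k:ℕ) = _
        rw [show (4:F) = 2*2 by norm_num, mul_pow]
      calc (2:F)^m * (2^(k:ℕ) * ((2:F)⁻¹)^(m-(k:ℕ)) * y k)
          = (2^(k:ℕ) * 2^(k:ℕ)) * ((2:F)^(m-(k:ℕ)) * ((2:F)⁻¹)^(m-(k:ℕ))) * y k := by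
            rw [h2m]; ring
        _ = c k * y k := by rw [hone, h4, mul_one]
    rw [heq] at h1
    exact h1
  have hc : Function.Injective c := by
    intro i j hij
    have : ((4^(i:ℕ) : ℕ) : F) = ((4^(j:ℕ) : ℕ) : F) := by push_cast; exact hij
    have := Nat.cast_injective this
    exact Fin.ext (Nat.pow_right_injective (by norm_num) this)
  -- get a basis vector, then the top one, then all of them
  have hsj : Pi.single j (1:F) ∈ p := single_mem_of_mem p c hc hT hxp hj
  have hu' : Matrix.det !![(1:F),1;0,1] = 1 := by
    rw [Matrix.det_fin_two_of]; ring
  have hv : symAct F m !![(1:F),1;0,1] (Pi.single j 1) ∈ p :=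
    hp ⟨!![(1:F),1;0,1], hu'⟩ _ hsj
  have hlast : Pi.single (Fin.last m) (1:F) ∈ p := by
    refine single_mem_of_mem p c hc hT hv ?_
    rw [symAct_upper']
    exact one_ne_zero
  have hu : Matrix.det !![(1:F),0;1,1] = 1 := by
    rw [Matrix.det_fin_two_of]; ring
  have hw : symAct F m !![(1:F),0;1,1] (Pi.single (Fin.last m) 1) ∈ p :=
    hp ⟨!![(1:F),0;1,1], hu⟩ _ hlast
  have hall : ∀ i : Fin (m+1), Pi.single i (1:F) ∈ p := by
    intro i
    refine single_mem_of_mem p c hc hT hw ?_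
    rw [symAct_lower']
    exact_mod_cast Nat.choose_pos (Nat.lt_succ_iff.mp i.isLt) |>.ne'
  rw [Submodule.eq_top_iff']
  intro y
  have hy : y = ∑ i : Fin (m+1), y i • (Pi.single i (1:F) : Fin (m+1) → F) := by
    funext k
    rw [Finset.sum_apply]
    rw [Finset.sum_eq_single k]
    · simp
    · intro b _ hbk
      simp [Pi.single_eq_of_ne' hbk]
    · simp
  rw [hy]
  exact Submodule.sum_mem p fun i _ => p.smul_mem _ (hall i)

end Aux

/-- Over a field `F` of characteristic zero, each symmetric power `Sym^m(F²)`
of the standard representation of `SL₂(F)` is irreducible, and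
`Sym^m(F²) ≅ Sym^{m'}(F²)` as `SL₂(F)`-representations if and only if
`m = m'`. -/
theorem stmt_17 (F : Type*) [Field F] [CharZero F] (m m' : ℕ) :
    (∀ p : Submodule F (Fin (m + 1) → F),
      (∀ g : Matrix.SpecialLinearGroup (Fin 2) F, ∀ x ∈ p,
        symAct F m (g : Matrix (Fin 2) (Fin 2) F) x ∈ p) → p = ⊥ ∨ p = ⊤) ∧
    ((∃ e : (Fin (m + 1) → F) ≃ₗ[F] (Fin (m' + 1) → F),
        ∀ (g : Matrix.SpecialLinearGroup (Fin 2) F) (x : Fin (m + 1) → F),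
          e (symAct F m (g : Matrix (Fin 2) (Fin 2) F) x) =
            symAct F m' (g : Matrix (Fin 2) (Fin 2) F) (e x)) ↔ m = m') := by
  constructor
  · exact fun p hp => symAct_irred m p hp
  · constructor
    · rintro ⟨e, -⟩
      have h := e.finrank_eq
      rw [Module.finrank_fin_fun, Module.finrank_fin_fun] at h
      omega
    · rintro rfl
      exact ⟨LinearEquiv.refl F _, fun g x => rfl⟩
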